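/- arXiv:0805.1077 — 2 statements merged into one kernel-verified Lean document; each statement's English description precedes it below -/
import Mathlib

section
/- Let A be an admissible pseudo-Hermitian n×n matrix with eigenvalues λ_p ≥ … ≥ λ_1 > μ_1 ≥ … ≥ μ_q and pseudo-orthonormal eigenbasis v_1,…,v_p, w_1,…,w_q, and let W = span{w_1,…,w_q}. For each 1 ≤ k ≤ q: (a) every x ∈ ℂⁿ₋ satisfying ⟨x, w_i⟩ = 0 for all 1 ≤ i ≤ k−1 has R_A(x) ≤ μ_k, with equality for x = w_k (so μ_k is this maximum); and (b) every nonzero x ∈ W satisfying ⟨x, w_i⟩ = 0 for all k+1 ≤ i ≤ q has R_A(x) ≥ μ_k, with equality for x = w_k (so μ_k is this minimum). -/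
open Matrix

/-- The signature matrix `J = diag(1,…,1,−1,…,−1)` with `p` ones and `q` minus-ones. -/
noncomputable def Jmat (p q : ℕ) : Matrix (Fin (p + q)) (Fin (p + q)) ℂ :=
  Matrix.diagonal (fun i => if (i : ℕ) < p then 1 else -1)

/-- The indefinite pairing `⟨z,w⟩ = Σ_{i<p} z_i conj(w_i) − Σ_{i≥p} z_i conj(w_i)`;
equivalently `w† · z` where `x† = (J conj(x))ᵀ`. -/
noncomputable def pairing (p q : ℕ) (z w : Fin (p + q) → ℂ) : ℂ :=
  ∑ i : Fin (p + q),
    (if (i : ℕ) < p then z i * (starRingEnd ℂ) (w i) else -(z i * (starRingEnd ℂ) (w i)))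

/-- The diagonal entries of `Λ = diag(λ_p, …, λ_1, μ_1, …, μ_q)`, where `lam` and `mu`
are 0-indexed: `lam i = λ_{i+1}` and `mu j = μ_{j+1}`. -/
noncomputable def diagEntries (p q : ℕ) (lam : Fin p → ℝ) (mu : Fin q → ℝ) :
    Fin (p + q) → ℂ :=
  fun i =>
    if h : (i : ℕ) < p then ((lam ⟨p - 1 - (i : ℕ), by omega⟩ : ℝ) : ℂ)
    else ((mu ⟨(i : ℕ) - p, by have := i.isLt; omega⟩ : ℝ) : ℂ)

/-- `A` is an admissible pseudo-Hermitian matrix with (real) eigenvalues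
`λ_p ≥ … ≥ λ_1 > μ_1 ≥ … ≥ μ_q`, recorded 0-indexed as `lam i = λ_{i+1}` (so `lam` is
monotone) and `mu j = μ_{j+1}` (so `mu` is antitone), with `λ_1 > μ_1`, and
`A = U Λ U⁻¹` for some invertible `U` with `U J Uᴴ = J`. -/
def IsAdmissible (p q : ℕ) (hp : 0 < p) (hq : 0 < q)
    (A : Matrix (Fin (p + q)) (Fin (p + q)) ℂ)
    (lam : Fin p → ℝ) (mu : Fin q → ℝ) : Prop :=
  A * Jmat p q = Jmat p q * A.conjTranspose ∧
  Monotone lam ∧ Antitone mu ∧ mu ⟨0, hq⟩ < lam ⟨0, hp⟩ ∧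
  ∃ U : Matrix (Fin (p + q)) (Fin (p + q)) ℂ,
    IsUnit U ∧ U * Jmat p q * U.conjTranspose = Jmat p q ∧
    A = U * Matrix.diagonal (diagEntries p q lam mu) * U⁻¹

/-- The Rayleigh ratio `R_A(x) = (x† A x)/(x† x)`, as a real number (for admissible
pseudo-Hermitian `A` both `x† A x` and `x† x` are real). -/
noncomputable def rayleigh (p q : ℕ) (A : Matrix (Fin (p + q)) (Fin (p + q)) ℂ)
    (x : Fin (p + q) → ℂ) : ℝ :=
  (pairing p q (A.mulVec x) x).re / (pairing p q x x).re

/-- A pseudo-orthonormal eigenbasis `v_1, …, v_p, w_1, …, w_q` (0-indexed) of an admissible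
matrix `A`: a basis of `ℂⁿ` with `A v_i = λ_i v_i`, `A w_j = μ_j w_j`, `⟨v_i,v_i⟩ = 1`,
`⟨w_j,w_j⟩ = −1`, and all pairings of distinct basis vectors zero. -/
def IsPseudoONEigenbasis (p q : ℕ) (A : Matrix (Fin (p + q)) (Fin (p + q)) ℂ)
    (lam : Fin p → ℝ) (mu : Fin q → ℝ)
    (v : Fin p → Fin (p + q) → ℂ) (w : Fin q → Fin (p + q) → ℂ) : Prop :=
  LinearIndependent ℂ (Fin.append v w) ∧
  Submodule.span ℂ (Set.range (Fin.append v w)) = ⊤ ∧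
  (∀ i, A.mulVec (v i) = (lam i : ℂ) • v i) ∧
  (∀ j, A.mulVec (w j) = (mu j : ℂ) • w j) ∧
  (∀ i i', pairing p q (v i) (v i') = if i = i' then 1 else 0) ∧
  (∀ j j', pairing p q (w j) (w j') = if j = j' then -1 else 0) ∧
  (∀ i j, pairing p q (v i) (w j) = 0) ∧
  (∀ j i, pairing p q (w j) (v i) = 0)

/-!
Expanding `x = ∑ c s • e s` in a pseudo-orthonormal eigenbasis with signs `ε s = ±1` and
eigenvalues `d s` diagonalises both forms:
`⟨A x, x⟩ - μ ⟨x, x⟩ = ∑ ε s (d s - μ) |c s|²`.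
Under the hypotheses of (a) and (b), with `μ = μ_k`, every nonzero term has a fixed sign
(`λ_i ≥ μ_k` on `V`, and on `W` the orthogonality conditions kill exactly the coefficients
of the `w_j` on the wrong side of `μ_k`), and dividing by `⟨x, x⟩ < 0` gives the bound.
-/
noncomputable def pairingₛₗ (p q : ℕ) :
    (Fin (p + q) → ℂ) →ₗ[ℂ] (Fin (p + q) → ℂ) →ₗ⋆[ℂ] ℂ :=
  LinearMap.mk₂'ₛₗ (RingHom.id ℂ) (starRingEnd ℂ) (pairing p q)
    (fun _ _ _ => by
      simp only [pairing, ← Finset.sum_add_distrib]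
      exact Finset.sum_congr rfl fun i _ => by split_ifs <;> simp only [Pi.add_apply] <;> ring)
    (fun _ _ _ => by
      simp only [pairing, smul_eq_mul, Finset.mul_sum]
      exact Finset.sum_congr rfl fun i _ => by
        split_ifs <;> simp only [Pi.smul_apply, smul_eq_mul, RingHom.id_apply] <;> ring)
    (fun _ _ _ => by
      simp only [pairing, ← Finset.sum_add_distrib]
      exact Finset.sum_congr rfl fun i _ => by
        split_ifs <;> simp only [Pi.add_apply, map_add] <;> ring)
    (fun _ _ _ => by
      simp only [pairing, smul_eq_mul, Finset.mul_sum]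
      exact Finset.sum_congr rfl fun i _ => by
        split_ifs <;> simp only [Pi.smul_apply, smul_eq_mul, map_mul] <;> ring)

theorem pairingₛₗ_apply (p q : ℕ) (z w : Fin (p + q) → ℂ) :
    pairingₛₗ p q z w = pairing p q z w :=
  rfl

theorem rayleigh_of_mulVec_eq_smul {p q : ℕ} {A : Matrix (Fin (p + q)) (Fin (p + q)) ℂ}
    {x : Fin (p + q) → ℂ} {μ : ℝ} (hx : A *ᵥ x = (μ : ℂ) • x) (hxx : (pairing p q x x).re ≠ 0) :
    rayleigh p q A x = μ := by
  rw [rayleigh, hx, ← pairingₛₗ_apply, map_smul, LinearMap.smul_apply, pairingₛₗ_apply,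
    smul_eq_mul, Complex.re_ofReal_mul, mul_div_cancel_right₀ _ hxx]

theorem rayleigh_le_of_re_pairing_neg {p q : ℕ} {A : Matrix (Fin (p + q)) (Fin (p + q)) ℂ}
    {x : Fin (p + q) → ℂ} {μ : ℝ} (hxx : (pairing p q x x).re < 0)
    (h : 0 ≤ (pairing p q (A *ᵥ x) x).re - μ * (pairing p q x x).re) :
    rayleigh p q A x ≤ μ := by
  rw [rayleigh, div_le_iff_of_neg hxx]
  linarith

theorem le_rayleigh_of_re_pairing_neg {p q : ℕ} {A : Matrix (Fin (p + q)) (Fin (p + q)) ℂ}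
    {x : Fin (p + q) → ℂ} {μ : ℝ} (hxx : (pairing p q x x).re < 0)
    (h : (pairing p q (A *ᵥ x) x).re - μ * (pairing p q x x).re ≤ 0) :
    μ ≤ rayleigh p q A x := by
  rw [rayleigh, le_div_iff_of_neg hxx]
  linarith

section OrthogonalEigenfamily

variable {p q : ℕ} {ι : Type*} [Fintype ι] [DecidableEq ι] {e : ι → Fin (p + q) → ℂ} {ε : ι → ℝ}

theorem pairing_sum_smul_left
    (he : ∀ s t, pairing p q (e s) (e t) = if s = t then (ε s : ℂ) else 0) (c : ι → ℂ) (t : ι) :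
    pairing p q (∑ s, c s • e s) (e t) = c t * ε t := by
  rw [← pairingₛₗ_apply]
  simp [map_sum, LinearMap.sum_apply, pairingₛₗ_apply, he]

theorem pairing_sum_smul_sum_smul
    (he : ∀ s t, pairing p q (e s) (e t) = if s = t then (ε s : ℂ) else 0) (c c' : ι → ℂ) :
    pairing p q (∑ s, c s • e s) (∑ s, c' s • e s) = ∑ s, ε s * (c s * starRingEnd ℂ (c' s)) := by
  rw [← pairingₛₗ_apply]
  simp only [map_sum, map_smul, map_smulₛₗ, LinearMap.sum_apply, LinearMap.smul_apply,
    pairingₛₗ_apply, he, smul_eq_mul, mul_ite, mul_zero, Finset.sum_ite_eq', Finset.mem_univ,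
    if_true]
  exact Finset.sum_congr rfl fun s _ => by ring

theorem re_pairing_sum_smul_self
    (he : ∀ s t, pairing p q (e s) (e t) = if s = t then (ε s : ℂ) else 0) (c : ι → ℂ) :
    (pairing p q (∑ s, c s • e s) (∑ s, c s • e s)).re = ∑ s, ε s * Complex.normSq (c s) := by
  simp [pairing_sum_smul_sum_smul he, Complex.mul_conj, ← Complex.ofReal_mul]

theorem re_pairing_sum_smul_self_neg
    (he : ∀ s t, pairing p q (e s) (e t) = if s = t then (ε s : ℂ) else 0) (hε : ∀ s, ε s < 0)
    {c : ι → ℂ} (hc : c ≠ 0) :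
    (pairing p q (∑ s, c s • e s) (∑ s, c s • e s)).re < 0 := by
  obtain ⟨t, ht⟩ := Function.ne_iff.mp hc
  rw [re_pairing_sum_smul_self he]
  exact Finset.sum_neg'
    (fun s _ => mul_nonpos_of_nonpos_of_nonneg (hε s).le (Complex.normSq_nonneg _))
    ⟨t, Finset.mem_univ t, mul_neg_of_neg_of_pos (hε t) (Complex.normSq_pos.mpr ht)⟩

variable {A : Matrix (Fin (p + q)) (Fin (p + q)) ℂ} {d : ι → ℝ}

theorem re_pairing_mulVec_sub_smul
    (he : ∀ s t, pairing p q (e s) (e t) = if s = t then (ε s : ℂ) else 0)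
    (hAe : ∀ s, A *ᵥ e s = (d s : ℂ) • e s) (c : ι → ℂ) (μ : ℝ) :
    (pairing p q (A *ᵥ ∑ s, c s • e s) (∑ s, c s • e s)).re
        - μ * (pairing p q (∑ s, c s • e s) (∑ s, c s • e s)).re
      = ∑ s, ε s * (d s - μ) * Complex.normSq (c s) := by
  have hAx : A *ᵥ ∑ s, c s • e s = ∑ s, (c s * d s) • e s := by
    simp only [Matrix.mulVec_sum, Matrix.mulVec_smul, hAe, smul_smul]
  have hterm : ∀ s, (ε s : ℂ) * (c s * d s * starRingEnd ℂ (c s))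
      = ((ε s * d s * Complex.normSq (c s) : ℝ) : ℂ) := fun s => by
    rw [mul_right_comm, Complex.mul_conj]; push_cast; ring
  rw [hAx, pairing_sum_smul_sum_smul he, re_pairing_sum_smul_self he]
  simp only [hterm, ← Complex.ofReal_sum, Complex.ofReal_re, Finset.mul_sum,
    ← Finset.sum_sub_distrib]
  exact Finset.sum_congr rfl fun s _ => by ring

variable {c : ι → ℂ} {μ : ℝ}

theorem rayleigh_sum_smul_le
    (he : ∀ s t, pairing p q (e s) (e t) = if s = t then (ε s : ℂ) else 0)
    (hAe : ∀ s, A *ᵥ e s = (d s : ℂ) • e s)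
    (hneg : (pairing p q (∑ s, c s • e s) (∑ s, c s • e s)).re < 0)
    (hμ : ∀ s, c s ≠ 0 → 0 ≤ ε s * (d s - μ)) :
    rayleigh p q A (∑ s, c s • e s) ≤ μ := by
  refine rayleigh_le_of_re_pairing_neg hneg ?_
  rw [re_pairing_mulVec_sub_smul he hAe]
  refine Finset.sum_nonneg fun s _ => ?_
  rcases eq_or_ne (c s) 0 with hs | hs
  · simp [hs]
  · exact mul_nonneg (hμ s hs) (Complex.normSq_nonneg _)

theorem le_rayleigh_sum_smul
    (he : ∀ s t, pairing p q (e s) (e t) = if s = t then (ε s : ℂ) else 0)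
    (hAe : ∀ s, A *ᵥ e s = (d s : ℂ) • e s)
    (hneg : (pairing p q (∑ s, c s • e s) (∑ s, c s • e s)).re < 0)
    (hμ : ∀ s, c s ≠ 0 → ε s * (d s - μ) ≤ 0) :
    μ ≤ rayleigh p q A (∑ s, c s • e s) := by
  refine le_rayleigh_of_re_pairing_neg hneg ?_
  rw [re_pairing_mulVec_sub_smul he hAe]
  refine Finset.sum_nonpos fun s _ => ?_
  rcases eq_or_ne (c s) 0 with hs | hs
  · simp [hs]
  · exact mul_nonpos_of_nonpos_of_nonneg (hμ s hs) (Complex.normSq_nonneg _)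

end OrthogonalEigenfamily

theorem IsAdmissible.mu_le_lam {p q : ℕ} {hp : 0 < p} {hq : 0 < q}
    {A : Matrix (Fin (p + q)) (Fin (p + q)) ℂ} {lam : Fin p → ℝ} {mu : Fin q → ℝ}
    (hA : IsAdmissible p q hp hq A lam mu) (i : Fin p) (j : Fin q) : mu j ≤ lam i := by
  obtain ⟨-, hlam, hmu, hgap, -⟩ := hA
  calc mu j ≤ mu ⟨0, hq⟩ := hmu (Nat.zero_le j.val)
    _ ≤ lam ⟨0, hp⟩ := hgap.le
    _ ≤ lam i := hlam (Nat.zero_le i.val)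

theorem IsAdmissible.antitone_mu {p q : ℕ} {hp : 0 < p} {hq : 0 < q}
    {A : Matrix (Fin (p + q)) (Fin (p + q)) ℂ} {lam : Fin p → ℝ} {mu : Fin q → ℝ}
    (hA : IsAdmissible p q hp hq A lam mu) : Antitone mu :=
  hA.2.2.1

namespace IsPseudoONEigenbasis

variable {p q : ℕ} {A : Matrix (Fin (p + q)) (Fin (p + q)) ℂ} {lam : Fin p → ℝ} {mu : Fin q → ℝ}
  {v : Fin p → Fin (p + q) → ℂ} {w : Fin q → Fin (p + q) → ℂ}

theorem span_append_eq_top (hvw : IsPseudoONEigenbasis p q A lam mu v w) :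
    Submodule.span ℂ (Set.range (Fin.append v w)) = ⊤ :=
  hvw.2.1

theorem mulVec_v (hvw : IsPseudoONEigenbasis p q A lam mu v w) (i : Fin p) :
    A *ᵥ v i = (lam i : ℂ) • v i :=
  hvw.2.2.1 i

theorem mulVec_w (hvw : IsPseudoONEigenbasis p q A lam mu v w) (j : Fin q) :
    A *ᵥ w j = (mu j : ℂ) • w j :=
  hvw.2.2.2.1 j

theorem pairing_append (hvw : IsPseudoONEigenbasis p q A lam mu v w) (s t : Fin (p + q)) :
    pairing p q (Fin.append v w s) (Fin.append v w t)
      = if s = t then ((Fin.append (fun _ ↦ 1) (fun _ ↦ -1) s : ℝ) : ℂ) else 0 := by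
  obtain ⟨-, -, -, -, hvv, hww, hvw0, hwv0⟩ := hvw
  induction s using Fin.addCases <;> induction t using Fin.addCases <;>
    simp [hvv, hww, hvw0, hwv0, Fin.ext_iff] <;> omega

theorem mulVec_append (hvw : IsPseudoONEigenbasis p q A lam mu v w) (s : Fin (p + q)) :
    A *ᵥ Fin.append v w s = ((Fin.append lam mu s : ℝ) : ℂ) • Fin.append v w s := by
  induction s using Fin.addCases <;> simp [hvw.mulVec_v, hvw.mulVec_w]

theorem pairing_w (hvw : IsPseudoONEigenbasis p q A lam mu v w) (j j' : Fin q) :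
    pairing p q (w j) (w j') = if j = j' then ((-1 : ℝ) : ℂ) else 0 := by
  simpa using hvw.2.2.2.2.2.1 j j'

theorem rayleigh_w (hvw : IsPseudoONEigenbasis p q A lam mu v w) (j : Fin q) :
    rayleigh p q A (w j) = mu j :=
  rayleigh_of_mulVec_eq_smul (hvw.mulVec_w j) (by simp [hvw.pairing_w])

theorem rayleigh_le (hvw : IsPseudoONEigenbasis p q A lam mu v w) (hmu : Antitone mu) {m : Fin q}
    (hlam : ∀ i, mu m ≤ lam i) {x : Fin (p + q) → ℂ} (hneg : (pairing p q x x).re < 0)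
    (horth : ∀ j < m, pairing p q x (w j) = 0) :
    rayleigh p q A x ≤ mu m := by
  obtain ⟨c, rfl⟩ := (Submodule.mem_span_range_iff_exists_fun ℂ).mp
    (hvw.span_append_eq_top ▸ Submodule.mem_top : x ∈ Submodule.span ℂ (Set.range (Fin.append v w)))
  refine rayleigh_sum_smul_le hvw.pairing_append hvw.mulVec_append hneg fun s hs => ?_
  induction s using Fin.addCases with
  | left i => simpa using hlam i
  | right j =>
    have hmj : m ≤ j := le_of_not_gt fun hjm => hs <| by
      have hcj := pairing_sum_smul_left hvw.pairing_append c (Fin.natAdd p j)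
      simpa [horth j hjm] using hcj.symm
    simpa using hmu hmj

theorem le_rayleigh (hvw : IsPseudoONEigenbasis p q A lam mu v w) (hmu : Antitone mu) {m : Fin q}
    {x : Fin (p + q) → ℂ} (hxW : x ∈ Submodule.span ℂ (Set.range w)) (hx : x ≠ 0)
    (horth : ∀ j, m < j → pairing p q x (w j) = 0) :
    mu m ≤ rayleigh p q A x := by
  obtain ⟨b, rfl⟩ := (Submodule.mem_span_range_iff_exists_fun ℂ).mp hxW
  have hb : b ≠ 0 := by rintro rfl; simp at hx
  refine le_rayleigh_sum_smul hvw.pairing_w hvw.mulVec_w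
    (re_pairing_sum_smul_self_neg hvw.pairing_w (fun _ ↦ neg_one_lt_zero) hb) fun j hj => ?_
  have hjm : j ≤ m := le_of_not_gt fun hmj => hj <| by
    simpa [pairing_sum_smul_left hvw.pairing_w] using horth j hmj
  simpa using hmu hjm

end IsPseudoONEigenbasis

/-- (a) `μ_k` is the maximum of `R_A(x)` over `x ∈ ℂⁿ₋` orthogonal to
`w_1, …, w_{k-1}`, attained at `w_k`; (b) `μ_k` is the minimum of `R_A(x)` over nonzero
`x ∈ W = span{w_1,…,w_q}` orthogonal to `w_{k+1}, …, w_q`, attained at `w_k`.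
(`k` is 1-indexed, `1 ≤ k ≤ q`.) -/
theorem mu_k_max_min_characterization
    (p q : ℕ) (hp : 0 < p) (hq : 0 < q)
    (A : Matrix (Fin (p + q)) (Fin (p + q)) ℂ)
    (lam : Fin p → ℝ) (mu : Fin q → ℝ)
    (v : Fin p → Fin (p + q) → ℂ) (w : Fin q → Fin (p + q) → ℂ)
    (hA : IsAdmissible p q hp hq A lam mu)
    (hvw : IsPseudoONEigenbasis p q A lam mu v w)
    (k : ℕ) (hk2 : k ≤ q) :
    (∀ x : Fin (p + q) → ℂ, (pairing p q x x).re < 0 →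
        (∀ j : Fin q, (j : ℕ) < k - 1 → pairing p q x (w j) = 0) →
        rayleigh p q A x ≤ mu ⟨k - 1, by omega⟩) ∧
    (∀ x : Fin (p + q) → ℂ, x ∈ Submodule.span ℂ (Set.range w) → x ≠ 0 →
        (∀ j : Fin q, k ≤ (j : ℕ) → pairing p q x (w j) = 0) →
        mu ⟨k - 1, by omega⟩ ≤ rayleigh p q A x) ∧
    rayleigh p q A (w ⟨k - 1, by omega⟩) = mu ⟨k - 1, by omega⟩ := by
  refine ⟨fun x hneg horth => ?_, fun x hxW hx horth => ?_, hvw.rayleigh_w _⟩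
  · exact hvw.rayleigh_le hA.antitone_mu (fun i ↦ hA.mu_le_lam i _) hneg fun j hj ↦ horth j hj
  · exact hvw.le_rayleigh hA.antitone_mu hxW hx fun j hj ↦
      horth j (by have : k - 1 < j := hj; omega)
end

section
/- (Courant–Fischer analogue, max-min form.) Let A be an admissible pseudo-Hermitian n×n matrix with eigenvalues λ_p ≥ … ≥ λ_1 > μ_1 ≥ … ≥ μ_q, and let 1 ≤ k ≤ p. Then: (i) for every choice of vectors u_1, …, u_{k−1} ∈ ℂⁿ there exists x ∈ ℂⁿ₊ with ⟨x, u_i⟩ = 0 for all i and R_A(x) ≤ λ_k; and (ii) there exist vectors u_1, …, u_{k−1} ∈ ℂⁿ such that every x ∈ ℂⁿ₊ with ⟨x, u_i⟩ = 0 for all i satisfies R_A(x) ≥ λ_k, and such that λ_k is attained by some such x. Consequently λ_k = max over (k−1)-tuples (u_1,…,u_{k−1}) of the infimum of R_A(x) over x ∈ ℂⁿ₊ orthogonal to u_1,…,u_{k−1}. -/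
/-!
In the coordinates `y = U⁻¹ x` the pairing becomes `∑ sᵢ |yᵢ|²` with signs `sᵢ = ±1`,
and `x† A x` becomes `∑ sᵢ dᵢ |yᵢ|²`, where `dᵢ` are the diagonal entries of `Λ`. Hence
`R_A(x) ≤ c` as soon as `sᵢ dᵢ ≤ sᵢ c` on the support of `y`, and `c ≤ R_A(x)` as soon
as `sᵢ c ≤ sᵢ dᵢ` there. For (i), a dimension count gives a nonzero `y` supported on the
coordinates of `λ_1, …, λ_k` with `U y ⊥ u₁, …, u_{k-1}`. For (ii), the `uᵢ` are chosen
so that `⟨x, uᵢ⟩` is the coordinate of `λᵢ` in `U⁻¹ x`: the remaining positive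
coordinates carry eigenvalues `≥ λ_k`, and the negative ones carry `μⱼ < λ_1 ≤ λ_k`.
-/

open Matrix

section Pairing

variable {p q : ℕ}

lemma pairing_eq_star_dotProduct (z w : Fin (p + q) → ℂ) :
    pairing p q z w = star w ⬝ᵥ Jmat p q *ᵥ z := by
  simp only [pairing, Jmat, dotProduct, mulVec_diagonal, Pi.star_apply, RCLike.star_def]
  refine Finset.sum_congr rfl fun i _ => ?_
  split_ifs <;> ring

lemma Jmat_mul_self : Jmat p q * Jmat p q = 1 := by
  rw [Jmat, diagonal_mul_diagonal, ← diagonal_one]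
  congr 1
  funext i
  split_ifs <;> norm_num

lemma conjTranspose_Jmat : (Jmat p q)ᴴ = Jmat p q := by
  rw [Jmat, diagonal_conjTranspose]
  congr 1
  funext i
  split_ifs <;> simp [*]

lemma conjTranspose_mul_Jmat_mul_self {U : Matrix (Fin (p + q)) (Fin (p + q)) ℂ}
    (hU : U * Jmat p q * Uᴴ = Jmat p q) : Uᴴ * Jmat p q * U = Jmat p q := by
  have hinv : (Jmat p q * Uᴴ * Jmat p q) * U = 1 :=
    mul_eq_one_comm.mp (by rw [← mul_assoc, ← mul_assoc, hU, Jmat_mul_self])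
  calc Uᴴ * Jmat p q * U = Jmat p q * ((Jmat p q * Uᴴ * Jmat p q) * U) := by
        simp only [← mul_assoc, Jmat_mul_self, one_mul]
    _ = Jmat p q := by rw [hinv, mul_one]

lemma pairing_mulVec_mulVec {U : Matrix (Fin (p + q)) (Fin (p + q)) ℂ}
    (hU : Uᴴ * Jmat p q * U = Jmat p q) (y w : Fin (p + q) → ℂ) :
    pairing p q (U *ᵥ y) (U *ᵥ w) = pairing p q y w := by
  rw [pairing_eq_star_dotProduct, pairing_eq_star_dotProduct, star_mulVec, mulVec_mulVec,
    dotProduct_mulVec, vecMul_vecMul, ← mul_assoc, hU, ← dotProduct_mulVec]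

lemma pairing_Jmat_mulVec_star (x v : Fin (p + q) → ℂ) :
    pairing p q x (Jmat p q *ᵥ star v) = v ⬝ᵥ x := by
  rw [pairing_eq_star_dotProduct, star_mulVec, star_star, conjTranspose_Jmat,
    ← dotProduct_mulVec, mulVec_mulVec, Jmat_mul_self, one_mulVec]

def signature (p q : ℕ) (i : Fin (p + q)) : ℝ := if (i : ℕ) < p then 1 else -1

lemma re_pairing_diagonal_mulVec (d : Fin (p + q) → ℝ) (y : Fin (p + q) → ℂ) :
    (pairing p q (diagonal (fun i => (d i : ℂ)) *ᵥ y) y).re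
      = ∑ i, signature p q i * d i * Complex.normSq (y i) := by
  simp only [pairing, Complex.re_sum, mulVec_diagonal, signature]
  refine Finset.sum_congr rfl fun i _ => ?_
  split_ifs <;> simp [mul_assoc, Complex.mul_conj, ← Complex.ofReal_mul]

lemma re_pairing_self (y : Fin (p + q) → ℂ) :
    (pairing p q y y).re = ∑ i, signature p q i * Complex.normSq (y i) := by
  simpa using re_pairing_diagonal_mulVec (fun _ => 1) y

lemma re_pairing_self_pos {y : Fin (p + q) → ℂ} (hy : y ≠ 0)
    (hsupp : ∀ i, y i ≠ 0 → (i : ℕ) < p) : 0 < (pairing p q y y).re := by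
  have hterm (i : Fin (p + q)) : 0 ≤ signature p q i * Complex.normSq (y i) := by
    by_cases hi : y i = 0
    · simp [hi]
    · simp [signature, hsupp i hi, Complex.normSq_nonneg]
  obtain ⟨i, hi⟩ := Function.ne_iff.mp hy
  rw [re_pairing_self]
  refine Finset.sum_pos' (fun i _ => hterm i) ⟨i, Finset.mem_univ i, ?_⟩
  simpa [signature, hsupp i hi] using hi

end Pairing

section Rayleigh

variable {p q : ℕ} {d : Fin (p + q) → ℝ} {y : Fin (p + q) → ℂ} {c : ℝ}

lemma rayleigh_diagonal_le (hy : 0 < (pairing p q y y).re)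
    (h : ∀ i, y i ≠ 0 → signature p q i * d i ≤ signature p q i * c) :
    rayleigh p q (diagonal fun i => (d i : ℂ)) y ≤ c := by
  rw [rayleigh, div_le_iff₀ hy, re_pairing_diagonal_mulVec, re_pairing_self, Finset.mul_sum]
  refine Finset.sum_le_sum fun i _ => ?_
  by_cases hi : y i = 0
  · simp [hi]
  · nlinarith [h i hi, Complex.normSq_nonneg (y i)]

lemma le_rayleigh_diagonal (hy : 0 < (pairing p q y y).re)
    (h : ∀ i, y i ≠ 0 → signature p q i * c ≤ signature p q i * d i) :
    c ≤ rayleigh p q (diagonal fun i => (d i : ℂ)) y := by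
  rw [rayleigh, le_div_iff₀ hy, re_pairing_diagonal_mulVec, re_pairing_self, Finset.mul_sum]
  refine Finset.sum_le_sum fun i _ => ?_
  by_cases hi : y i = 0
  · simp [hi]
  · nlinarith [h i hi, Complex.normSq_nonneg (y i)]

end Rayleigh

lemma exists_ne_zero_forall_dotProduct_eq_zero {K ι : Type*} [Field K] [Fintype ι] {m : ℕ}
    (s : Finset ι) (v : Fin m → ι → K) (hm : m < s.card) :
    ∃ y : ι → K, y ≠ 0 ∧ (∀ i ∉ s, y i = 0) ∧ ∀ j, v j ⬝ᵥ y = 0 := by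
  classical
  let f := (of v).mulVecLin.prod (LinearMap.funLeft K K ((↑) : {i // i ∉ s} → ι))
  have hrank :
      Module.finrank K ((Fin m → K) × ({i // i ∉ s} → K)) < Module.finrank K (ι → K) := by
    rw [Module.finrank_prod, Module.finrank_fintype_fun_eq_card, Module.finrank_fintype_fun_eq_card,
      Module.finrank_fintype_fun_eq_card, Fintype.card_fin, Fintype.card_subtype_compl,
      Fintype.card_coe]
    have := s.card_le_univ
    omega
  obtain ⟨y, hy, hy0⟩ :=
    (Submodule.ne_bot_iff _).mp (LinearMap.ker_ne_bot_of_finrank_lt (f := f) hrank)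
  have hv : of v *ᵥ y = 0 := congrArg Prod.fst (LinearMap.mem_ker.mp hy)
  have hs : (fun i : {i // i ∉ s} => y i) = 0 := congrArg Prod.snd (LinearMap.mem_ker.mp hy)
  exact ⟨y, hy0, fun i hi => congrFun hs ⟨i, hi⟩, congrFun hv⟩

section Eigenvalues

variable {p q : ℕ}

def lamIndex (p q : ℕ) (j : Fin p) : Fin (p + q) := ⟨p - 1 - j, by omega⟩

lemma lamIndex_injective : Function.Injective (lamIndex p q) := by
  intro j j' h
  simp only [lamIndex, Fin.mk.injEq] at h
  omega

lemma exists_lamIndex_eq {i : Fin (p + q)} (hi : (i : ℕ) < p) : ∃ j, lamIndex p q j = i :=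
  ⟨⟨p - 1 - i, by omega⟩, Fin.ext (by simp [lamIndex]; omega)⟩

lemma lamIndex_lt (j : Fin p) : ((lamIndex p q j : Fin (p + q)) : ℕ) < p := by
  simp [lamIndex]
  omega

def realDiagEntries (p q : ℕ) (lam : Fin p → ℝ) (mu : Fin q → ℝ) (i : Fin (p + q)) :
    ℝ :=
  if h : (i : ℕ) < p then lam ⟨p - 1 - (i : ℕ), by omega⟩
  else mu ⟨(i : ℕ) - p, by have := i.isLt; omega⟩

lemma diagEntries_eq_ofReal (lam : Fin p → ℝ) (mu : Fin q → ℝ) :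
    diagEntries p q lam mu = fun i => (realDiagEntries p q lam mu i : ℂ) := by
  funext i
  by_cases h : (i : ℕ) < p <;> simp [diagEntries, realDiagEntries, h]

lemma realDiagEntries_lamIndex (lam : Fin p → ℝ) (mu : Fin q → ℝ) (j : Fin p) :
    realDiagEntries p q lam mu (lamIndex p q j) = lam j := by
  simp only [realDiagEntries, lamIndex_lt, dite_true]
  congr
  simp [lamIndex]
  omega

lemma signature_lamIndex (j : Fin p) : signature p q (lamIndex p q j) = 1 := by
  simp [signature, lamIndex_lt]

lemma signature_mul_le_signature_mul_realDiagEntries {hp : 0 < p} {hq : 0 < q}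
    {lam : Fin p → ℝ} {mu : Fin q → ℝ} (hlam : Monotone lam) (hmu : Antitone mu)
    (hlm : mu ⟨0, hq⟩ < lam ⟨0, hp⟩) (j : Fin p) {i : Fin (p + q)}
    (hi : ∀ j' < j, lamIndex p q j' ≠ i) :
    signature p q i * lam j ≤ signature p q i * realDiagEntries p q lam mu i := by
  by_cases h : (i : ℕ) < p
  · obtain ⟨j', rfl⟩ := exists_lamIndex_eq (q := q) h
    rw [signature_lamIndex, realDiagEntries_lamIndex, one_mul, one_mul]
    exact hlam (not_lt.mp fun hj' => hi j' hj' rfl)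
  · have hmu0 : mu ⟨(i : ℕ) - p, by omega⟩ ≤ mu ⟨0, hq⟩ := hmu (by simp [Fin.le_def])
    have hlam0 : lam ⟨0, hp⟩ ≤ lam j := hlam (by simp [Fin.le_def])
    simp only [signature, realDiagEntries, h, if_false, dite_false]
    linarith

end Eigenvalues

namespace IsAdmissible

variable {p q : ℕ} {hp : 0 < p} {hq : 0 < q} {A : Matrix (Fin (p + q)) (Fin (p + q)) ℂ}
  {lam : Fin p → ℝ} {mu : Fin q → ℝ}

lemma exists_eigenbasis (hA : IsAdmissible p q hp hq A lam mu) :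
    ∃ U : Matrix (Fin (p + q)) (Fin (p + q)) ℂ, U * U⁻¹ = 1 ∧ U⁻¹ * U = 1 ∧
      (∀ y w, pairing p q (U *ᵥ y) (U *ᵥ w) = pairing p q y w) ∧
      ∀ y, rayleigh p q A (U *ᵥ y)
        = rayleigh p q (diagonal fun i => (realDiagEntries p q lam mu i : ℂ)) y := by
  obtain ⟨-, -, -, -, U, hU, hUJ, rfl⟩ := hA
  have hdet := (isUnit_iff_isUnit_det U).mp hU
  have hpair := pairing_mulVec_mulVec (conjTranspose_mul_Jmat_mul_self hUJ)
  refine ⟨U, mul_nonsing_inv U hdet, nonsing_inv_mul U hdet, hpair, fun y => ?_⟩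
  rw [rayleigh, rayleigh, mulVec_mulVec, mul_assoc, mul_assoc, nonsing_inv_mul U hdet, mul_one,
    ← mulVec_mulVec, hpair, hpair, diagEntries_eq_ofReal]

theorem exists_orthogonal_rayleigh_le (hA : IsAdmissible p q hp hq A lam mu) (j : Fin p)
    (u : Fin j → Fin (p + q) → ℂ) :
    ∃ x, 0 < (pairing p q x x).re ∧ (∀ i, pairing p q x (u i) = 0) ∧
      rayleigh p q A x ≤ lam j := by
  obtain ⟨U, -, -, hpair, hray⟩ := hA.exists_eigenbasis
  obtain ⟨-, hlam, -⟩ := hA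
  let s := (Finset.Iic j).map ⟨lamIndex p q, lamIndex_injective⟩
  obtain ⟨y, hy0, hys, hyu⟩ := exists_ne_zero_forall_dotProduct_eq_zero s
    (fun i => star (u i) ᵥ* (Jmat p q * U)) (by simp [s])
  have hsupp (i) (hi : y i ≠ 0) : ∃ j' ≤ j, lamIndex p q j' = i := by
    simpa [s] using not_imp_comm.mp (hys i) hi
  have hpos : 0 < (pairing p q y y).re := re_pairing_self_pos hy0 fun i hi => by
    obtain ⟨j', -, rfl⟩ := hsupp i hi
    exact lamIndex_lt j'
  refine ⟨U *ᵥ y, by rwa [hpair], fun i => ?_, ?_⟩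
  · rw [pairing_eq_star_dotProduct, mulVec_mulVec, dotProduct_mulVec, hyu]
  · rw [hray]
    refine rayleigh_diagonal_le hpos fun i hi => ?_
    obtain ⟨j', hj', rfl⟩ := hsupp i hi
    rw [signature_lamIndex, realDiagEntries_lamIndex, one_mul, one_mul]
    exact hlam hj'

theorem exists_orthogonal_le_rayleigh (hA : IsAdmissible p q hp hq A lam mu) (j : Fin p) :
    ∃ u : Fin j → Fin (p + q) → ℂ,
      (∀ x, 0 < (pairing p q x x).re → (∀ i, pairing p q x (u i) = 0) →
        lam j ≤ rayleigh p q A x) ∧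
      ∃ x, 0 < (pairing p q x x).re ∧ (∀ i, pairing p q x (u i) = 0) ∧
        rayleigh p q A x = lam j := by
  obtain ⟨U, hUU', hU'U, hpair, hray⟩ := hA.exists_eigenbasis
  obtain ⟨-, hlam, hmu, hlm, -⟩ := hA
  let t (i : Fin j) : Fin (p + q) := lamIndex p q (Fin.castLE j.is_lt.le i)
  let u (i : Fin j) : Fin (p + q) → ℂ := Jmat p q *ᵥ star (U⁻¹ (t i))
  have hortho (y : Fin (p + q) → ℂ) (i : Fin j) : pairing p q (U *ᵥ y) (u i) = y (t i) := by
    rw [pairing_Jmat_mulVec_star, ← mulVec, mulVec_mulVec, hU'U, one_mulVec]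
  have hlower (y : Fin (p + q) → ℂ) (hy : 0 < (pairing p q y y).re) (hyu : ∀ i, y (t i) = 0) :
      lam j ≤ rayleigh p q A (U *ᵥ y) := by
    rw [hray]
    refine le_rayleigh_diagonal hy fun i hi => ?_
    refine signature_mul_le_signature_mul_realDiagEntries hlam hmu hlm j fun j' hj' hj'i => ?_
    exact hi (hj'i ▸ (hyu ⟨j', hj'⟩ : y (lamIndex p q j') = 0))
  refine ⟨u, fun x hx hxu => ?_, ?_⟩
  · obtain ⟨y, rfl⟩ : ∃ y, x = U *ᵥ y :=
      ⟨U⁻¹ *ᵥ x, by rw [mulVec_mulVec, hUU', one_mulVec]⟩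
    rw [hpair] at hx
    exact hlower y hx fun i => (hortho y i).symm.trans (hxu i)
  · let e : Fin (p + q) → ℂ := Pi.single (lamIndex p q j) 1
    have he (i) (hi : e i ≠ 0) : i = lamIndex p q j := by
      by_contra h
      exact hi (Pi.single_eq_of_ne h 1)
    have het (i : Fin j) : e (t i) = 0 :=
      Pi.single_eq_of_ne (lamIndex_injective.ne (Fin.ne_of_lt i.is_lt)) 1
    have hpos : 0 < (pairing p q e e).re := re_pairing_self_pos (by simp [e]) fun i hi => by
      rw [he i hi]
      exact lamIndex_lt j
    refine ⟨U *ᵥ e, by rwa [hpair], fun i => by rw [hortho, het],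
      le_antisymm ?_ (hlower e hpos het)⟩
    rw [hray]
    refine rayleigh_diagonal_le hpos fun i hi => ?_
    rw [he i hi, realDiagEntries_lamIndex]

end IsAdmissible

/-- Courant–Fischer analogue, max-min form: for `1 ≤ k ≤ p`,
(i) for every `(k−1)`-tuple `u` there is `x ∈ ℂⁿ₊` orthogonal to all `u_i` with
`R_A(x) ≤ λ_k`; (ii) there is a `(k−1)`-tuple `u` such that every `x ∈ ℂⁿ₊`
orthogonal to all `u_i` has `R_A(x) ≥ λ_k`, with `λ_k` attained. -/
theorem courant_fischer_max_min
    (p q : ℕ) (hp : 0 < p) (hq : 0 < q)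
    (A : Matrix (Fin (p + q)) (Fin (p + q)) ℂ)
    (lam : Fin p → ℝ) (mu : Fin q → ℝ)
    (hA : IsAdmissible p q hp hq A lam mu)
    (k : ℕ) (hk2 : k ≤ p) :
    (∀ u : Fin (k - 1) → Fin (p + q) → ℂ,
        ∃ x : Fin (p + q) → ℂ, 0 < (pairing p q x x).re ∧
          (∀ i, pairing p q x (u i) = 0) ∧
          rayleigh p q A x ≤ lam ⟨k - 1, by omega⟩) ∧
    (∃ u : Fin (k - 1) → Fin (p + q) → ℂ,
        (∀ x : Fin (p + q) → ℂ, 0 < (pairing p q x x).re →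
            (∀ i, pairing p q x (u i) = 0) →
            lam ⟨k - 1, by omega⟩ ≤ rayleigh p q A x) ∧
        (∃ x : Fin (p + q) → ℂ, 0 < (pairing p q x x).re ∧
            (∀ i, pairing p q x (u i) = 0) ∧
            rayleigh p q A x = lam ⟨k - 1, by omega⟩)) :=
  ⟨hA.exists_orthogonal_rayleigh_le ⟨k - 1, by omega⟩,
    hA.exists_orthogonal_le_rayleigh ⟨k - 1, by omega⟩⟩
end
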